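/- Let (Iw, Ib, Jw, Jb) be a refined cortege arranged on a circle: the elements of Iw ∪ Ib are placed in increasing order on the upper semicircle and those of Jw ∪ Jb in increasing order on the lower semicircle, with Iw, Jw colored white and Ib, Jb colored black. Suppose M is a planar perfect matching (non-crossing chords) on these points such that every chord within the upper arc or within the lower arc joins points of different colors, and every chord between the two arcs joins points of the same color. Then |Iw| − |Ib| = |Jw| − |Jb|. -/
import Mathlib


namespace FeasibleMatching

/-- Points on the circle: `inl i` is a row index placed on the upper semicircle,
`inr j` a column index placed on the lower semicircle. -/
abbrev Pt := Sum ℕ ℕ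

/-- The clockwise circular order, cut between the end of the lower arc and the start of
the upper arc: row indices in increasing order, then column indices in decreasing order. -/
def cw : Pt → Pt → Prop
  | Sum.inl i, Sum.inl i' => i < i'
  | Sum.inl _, Sum.inr _ => True
  | Sum.inr _, Sum.inl _ => False
  | Sum.inr j, Sum.inr j' => j' < j

/-- Two chords `{a,b}` and `{c,d}` cross on the circle. -/
def Crossing (a b c d : Pt) : Prop :=
  (cw a c ∧ cw c b ∧ cw b d) ∨ (cw c a ∧ cw a d ∧ cw d b)

end FeasibleMatching

open FeasibleMatching in
/-- If a refined cortege `(Iw, Ib, Jw, Jb)` admits a feasible (planar, color-compatible)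
perfect matching, then `|Iw| − |Ib| = |Jw| − |Jb|`. -/
theorem feasible_matching_balance
    (Iw Ib Jw Jb : Finset ℕ)
    (hIdisj : Disjoint Iw Ib) (hJdisj : Disjoint Jw Jb)
    (M : Finset (Pt × Pt))
    -- every couple consists of two distinct points of the ground set
    (hmem : ∀ p ∈ M, p.1 ≠ p.2 ∧
      (∀ a ∈ [p.1, p.2], (∃ i ∈ Iw ∪ Ib, a = Sum.inl i) ∨ (∃ j ∈ Jw ∪ Jb, a = Sum.inr j)))
    -- perfect: every point of the ground set lies in exactly one couple
    (hperfect : ∀ a : Pt,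
      ((∃ i ∈ Iw ∪ Ib, a = Sum.inl i) ∨ (∃ j ∈ Jw ∪ Jb, a = Sum.inr j)) →
      ∃! p, p ∈ M ∧ (a = p.1 ∨ a = p.2))
    -- color condition: R- and C-couples join different colors, RC-couples equal colors
    (hcolor : ∀ p ∈ M,
      (∀ i i' : ℕ, p = (Sum.inl i, Sum.inl i') → (i ∈ Iw ↔ i' ∈ Ib)) ∧
      (∀ j j' : ℕ, p = (Sum.inr j, Sum.inr j') → (j ∈ Jw ↔ j' ∈ Jb)) ∧
      (∀ i j : ℕ, p = (Sum.inl i, Sum.inr j) ∨ p = (Sum.inr j, Sum.inl i) →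
        (i ∈ Iw ↔ j ∈ Jw)))
    -- planarity: no two chords cross
    (hplanar : ∀ p ∈ M, ∀ p' ∈ M, ¬ Crossing p.1 p.2 p'.1 p'.2) :
    ((Iw.card : ℤ) - Ib.card) = ((Jw.card : ℤ) - Jb.card) := by
  classical
  set f : Pt → ℤ := Sum.elim
    (fun i => (if i ∈ Iw then 1 else 0) - (if i ∈ Ib then 1 else 0))
    (fun j => (if j ∈ Jb then 1 else 0) - (if j ∈ Jw then 1 else 0)) with hf
  set S : Finset Pt := (Iw ∪ Ib).image Sum.inl ∪ (Jw ∪ Jb).image Sum.inr with hS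
  have hGd : ∀ a : Pt, a ∈ S ↔
      ((∃ i ∈ Iw ∪ Ib, a = Sum.inl i) ∨ (∃ j ∈ Jw ∪ Jb, a = Sum.inr j)) := by
    intro a
    simp only [hS, Finset.mem_union, Finset.mem_image]
    constructor
    · rintro (⟨i, hi, rfl⟩ | ⟨j, hj, rfl⟩)
      · exact Or.inl ⟨i, hi, rfl⟩
      · exact Or.inr ⟨j, hj, rfl⟩
    · rintro (⟨i, hi, rfl⟩ | ⟨j, hj, rfl⟩)
      · exact Or.inl ⟨i, hi, rfl⟩
      · exact Or.inr ⟨j, hj, rfl⟩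
  have hmemGd : ∀ p ∈ M, ∀ a, (a = p.1 ∨ a = p.2) →
      ((∃ i ∈ Iw ∪ Ib, a = Sum.inl i) ∨ (∃ j ∈ Jw ∪ Jb, a = Sum.inr j)) := by
    intro p hp a ha
    apply (hmem p hp).2
    rcases ha with rfl | rfl <;> simp
  have hcover : S = M.biUnion (fun p => {p.1, p.2}) := by
    ext a
    simp only [Finset.mem_biUnion, Finset.mem_insert, Finset.mem_singleton]
    constructor
    · intro ha
      obtain ⟨p, ⟨hp, hap⟩, _⟩ := hperfect a ((hGd a).mp ha)
      exact ⟨p, hp, hap⟩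
    · rintro ⟨p, hp, hap⟩
      exact (hGd a).mpr (hmemGd p hp a hap)
  have hdisj : (M : Set (Pt × Pt)).PairwiseDisjoint
      (fun p : Pt × Pt => ({p.1, p.2} : Finset Pt)) := by
    intro p hp p' hp' hne
    rw [Function.onFun, Finset.disjoint_left]
    intro a ha ha'
    simp only [Finset.mem_insert, Finset.mem_singleton] at ha ha'
    obtain ⟨q, hq, huniq⟩ := hperfect a (hmemGd p hp a ha)
    exact hne ((huniq p ⟨Finset.mem_coe.mp hp, ha⟩).trans (huniq p' ⟨Finset.mem_coe.mp hp', ha'⟩).symm)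
  have hIwb : ∀ i ∈ Iw, i ∉ Ib := fun i hi => Finset.disjoint_left.mp hIdisj hi
  have hJwb : ∀ j ∈ Jw, j ∉ Jb := fun j hj => Finset.disjoint_left.mp hJdisj hj
  have hzero : ∀ p ∈ M, f p.1 + f p.2 = 0 := by
    intro p hp
    obtain ⟨hc1, hc2, hc3⟩ := hcolor p hp
    obtain ⟨a, b⟩ := p
    have h1 := hmemGd (a, b) hp a (Or.inl rfl)
    have h2 := hmemGd (a, b) hp b (Or.inr rfl)
    cases a with
    | inl i =>
      have hi : i ∈ Iw ∨ i ∈ Ib := by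
        rcases h1 with ⟨i', hi', h⟩ | ⟨j', _, h⟩
        · cases h; exact Finset.mem_union.mp hi'
        · cases h
      cases b with
      | inl i' =>
        have hi' : i' ∈ Iw ∨ i' ∈ Ib := by
          rcases h2 with ⟨k, hk, h⟩ | ⟨j', _, h⟩
          · cases h; exact Finset.mem_union.mp hk
          · cases h
        have hc := hc1 i i' rfl
        rcases hi with h | h
        · have hb : i' ∈ Ib := hc.mp h
          have hnw : i' ∉ Iw := fun h' => hIwb i' h' hb
          simp [hf, h, hb, hnw, hIwb i h]
        · have hnw : i ∉ Iw := fun h' => hIwb i h' h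
          have hnb : i' ∉ Ib := fun h' => hnw (hc.mpr h')
          have hw : i' ∈ Iw := hi'.resolve_right hnb
          simp [hf, h, hnw, hnb, hw]
      | inr j =>
        have hj : j ∈ Jw ∨ j ∈ Jb := by
          rcases h2 with ⟨k, _, h⟩ | ⟨j', hj', h⟩
          · cases h
          · cases h; exact Finset.mem_union.mp hj'
        have hc := hc3 i j (Or.inl rfl)
        rcases hi with h | h
        · have hw : j ∈ Jw := hc.mp h
          simp [hf, h, hw, hIwb i h, hJwb j hw]
        · have hnw : i ∉ Iw := fun h' => hIwb i h' h
          have hnjw : j ∉ Jw := fun h' => hnw (hc.mpr h')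
          have hjb : j ∈ Jb := hj.resolve_left hnjw
          simp [hf, h, hnw, hnjw, hjb]
    | inr j =>
      have hj : j ∈ Jw ∨ j ∈ Jb := by
        rcases h1 with ⟨k, _, h⟩ | ⟨j', hj', h⟩
        · cases h
        · cases h; exact Finset.mem_union.mp hj'
      cases b with
      | inl i =>
        have hi : i ∈ Iw ∨ i ∈ Ib := by
          rcases h2 with ⟨i', hi', h⟩ | ⟨j', _, h⟩
          · cases h; exact Finset.mem_union.mp hi'
          · cases h
        have hc := hc3 i j (Or.inr rfl)
        rcases hi with h | h
        · have hw : j ∈ Jw := hc.mp h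
          simp [hf, h, hw, hIwb i h, hJwb j hw]
        · have hnw : i ∉ Iw := fun h' => hIwb i h' h
          have hnjw : j ∉ Jw := fun h' => hnw (hc.mpr h')
          have hjb : j ∈ Jb := hj.resolve_left hnjw
          simp [hf, h, hnw, hnjw, hjb]
      | inr j' =>
        have hj' : j' ∈ Jw ∨ j' ∈ Jb := by
          rcases h2 with ⟨k, _, h⟩ | ⟨k, hk, h⟩
          · cases h
          · cases h; exact Finset.mem_union.mp hk
        have hc := hc2 j j' rfl
        rcases hj with h | h
        · have hb : j' ∈ Jb := hc.mp h
          have hnw : j' ∉ Jw := fun h' => hJwb j' h' hb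
          simp [hf, h, hb, hnw, hJwb j h]
        · have hnw : j ∉ Jw := fun h' => hJwb j h' h
          have hnb : j' ∉ Jb := fun h' => hnw (hc.mpr h')
          have hw : j' ∈ Jw := hj'.resolve_right hnb
          simp [hf, h, hnw, hnb, hw]
  have hsum0 : ∑ a ∈ S, f a = 0 := by
    rw [hcover, Finset.sum_biUnion hdisj]
    refine Finset.sum_eq_zero fun p hp => ?_
    rw [Finset.sum_pair (hmem p hp).1]
    exact hzero p hp
  have hdisjS : Disjoint ((Iw ∪ Ib).image Sum.inl)
      ((Jw ∪ Jb).image (Sum.inr : ℕ → Pt)) := by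
    simp [Finset.disjoint_left]
  have e1 : ∀ (A B : Finset ℕ), ∑ i ∈ A ∪ B, (if i ∈ A then (1:ℤ) else 0) = A.card := by
    intro A B
    rw [Finset.sum_ite_mem, Finset.inter_eq_right.mpr Finset.subset_union_left]
    simp
  have e2 : ∀ (A B : Finset ℕ), ∑ i ∈ A ∪ B, (if i ∈ B then (1:ℤ) else 0) = B.card := by
    intro A B
    rw [Finset.sum_ite_mem, Finset.inter_eq_right.mpr Finset.subset_union_right]
    simp
  rw [hS, Finset.sum_union hdisjS,
    Finset.sum_image (fun _ _ _ _ h => Sum.inl.inj h),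
    Finset.sum_image (fun _ _ _ _ h => Sum.inr.inj h)] at hsum0
  simp only [hf, Sum.elim_inl, Sum.elim_inr, Finset.sum_sub_distrib] at hsum0
  rw [e1 Iw Ib, e2 Iw Ib, e2 Jw Jb, e1 Jw Jb] at hsum0
  linarith
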